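/- There exists a continuous VBG_{1/2} function f:[0,1]→ℝ such that V_{1/2}(f, K_f) = ∞. (Hence VBG_{1/2} functions do not coincide with continuous functions f satisfying V_{1/2}(f,K_f)<∞, even for real-valued functions.) -/

import Mathlib

open Set MeasureTheory
open scoped ENNReal NNReal

/-- The real-valued variation function `v_f(x) = V(f,[a,x])`. -/
noncomputable def vfn {X : Type*} [NormedAddCommGroup X] (f : ℝ → X) (a x : ℝ) : ℝ :=
  (eVariationOn f (Set.Icc a x)).toReal

/-- The fractional variation `V_α(g, K)`: the supremum of sums
`Σ |g(b_i) - g(a_i)|^α` over finite collections of non-overlapping intervals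
`[a_i, b_i]` with endpoints in `K`. -/
noncomputable def fracVar (α : ℝ) (g : ℝ → ℝ) (K : Set ℝ) : ℝ≥0∞ :=
  ⨆ (m : ℕ) (p : Fin m → ℝ × ℝ)
    (_ : ∀ i, (p i).1 ∈ K ∧ (p i).2 ∈ K ∧ (p i).1 ≤ (p i).2)
    (_ : ∀ i j, i < j → (p i).2 ≤ (p j).1),
    ∑ i, ENNReal.ofReal (|g (p i).2 - g (p i).1| ^ α)

/-- `g` is twice differentiable on `[a,b]` (unilateral derivatives at the endpoints). -/
def TwiceDiffOn {X : Type*} [NormedAddCommGroup X] [NormedSpace ℝ X]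
    (g : ℝ → X) (a b : ℝ) : Prop :=
  ∃ g' g'' : ℝ → X,
    (∀ x ∈ Set.Icc a b, HasDerivWithinAt g (g' x) (Set.Icc a b) x) ∧
    (∀ x ∈ Set.Icc a b, HasDerivWithinAt g' (g'' x) (Set.Icc a b) x)

/-- `f` restricted to `[c,d]` admits an arc-length parametrization which is
twice differentiable: `f` has bounded variation on `[c,d]` and there is a twice
differentiable `g` on `[0, V(f,[c,d])]` with `g ∘ v_f = f` on `[c,d]`. -/
def HasC2ArcLengthParam {X : Type*} [NormedAddCommGroup X] [NormedSpace ℝ X]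
    (f : ℝ → X) (c d : ℝ) : Prop :=
  BoundedVariationOn f (Set.Icc c d) ∧
  ∃ g : ℝ → X, TwiceDiffOn g 0 (vfn f c d) ∧ ∀ x ∈ Set.Icc c d, g (vfn f c x) = f x

/-- The set `K_f` of points `x ∈ [a,b]` such that there is no open interval `U ∋ x`
such that `f` restricted to `closure U ∩ [a,b]` is either constant or admits a twice
differentiable arc-length parametrization. -/
def Kset {X : Type*} [NormedAddCommGroup X] [NormedSpace ℝ X]
    (f : ℝ → X) (a b : ℝ) : Set ℝ :=
  {x : ℝ | x ∈ Set.Icc a b ∧ ¬ ∃ c d : ℝ, c < x ∧ x < d ∧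
    ((∀ y ∈ Set.Icc (max c a) (min d b), ∀ z ∈ Set.Icc (max c a) (min d b), f y = f z) ∨
     HasC2ArcLengthParam f (max c a) (min d b))}

/-- `f : [a,b] → X` is `VBG_{1/2}`: `f` has bounded variation and `K_f` is a countable
union of closed sets `A m` with `V_{1/2}(v_f, A m) < ∞`. -/
def VBGHalf {X : Type*} [NormedAddCommGroup X] [NormedSpace ℝ X]
    (f : ℝ → X) (a b : ℝ) : Prop :=
  BoundedVariationOn f (Set.Icc a b) ∧
  ∃ A : ℕ → Set ℝ,
    (∀ m, IsClosed (A m) ∧ A m ⊆ Set.Icc a b ∧ fracVar (1/2) (vfn f a) (A m) < ⊤) ∧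
    Kset f a b = ⋃ m, A m

/-- `f` is Lebesgue equivalent to `g` on `[a,b]`: `g = f ∘ h` for some homeomorphism
`h` of `[a,b]` onto itself. -/
def LebEquiv {X : Type*} [NormedAddCommGroup X] [NormedSpace ℝ X]
    (f g : ℝ → X) (a b : ℝ) : Prop :=
  ∃ h : ℝ → ℝ, ContinuousOn h (Set.Icc a b) ∧
    Set.BijOn h (Set.Icc a b) (Set.Icc a b) ∧
    ∀ x ∈ Set.Icc a b, g x = f (h x)

/-- `φ` is pointwise Lipschitz on `s`: at every `x ∈ s` the difference quotients of
`φ` are bounded near `x`. -/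
def PtwiseLipschitzOn {X : Type*} [NormedAddCommGroup X]
    (φ : ℝ → X) (s : Set ℝ) : Prop :=
  ∀ x ∈ s, ∃ C : ℝ, ∃ δ > 0, ∀ y ∈ s, |y - x| < δ → ‖φ y - φ x‖ ≤ C * |y - x|

/-- The norm of `X` is Gâteaux differentiable away from `0`. -/
def GateauxSmoothNorm (X : Type*) [NormedAddCommGroup X] [NormedSpace ℝ X] : Prop :=
  ∀ x : X, x ≠ 0 → ∃ L : X →L[ℝ] ℝ, ∀ v : X, HasLineDerivAt ℝ (fun y : X => ‖y‖) (L v) x v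

/-- `g` is absolutely continuous on `[a,b]` (ε-δ definition with finite collections of
non-overlapping intervals). -/
def AbsContOn (g : ℝ → ℝ) (a b : ℝ) : Prop :=
  ∀ ε > 0, ∃ δ > 0, ∀ n : ℕ, ∀ p : Fin n → ℝ × ℝ,
    (∀ i, (p i).1 ∈ Set.Icc a b ∧ (p i).2 ∈ Set.Icc a b ∧ (p i).1 ≤ (p i).2) →
    (∀ i j, i < j → (p i).2 ≤ (p j).1) →
    (∑ i, ((p i).2 - (p i).1)) < δ →
    (∑ i, |g (p i).2 - g (p i).1|) < ε

/-!
The example is the sawtooth `f x = dist(x, {0} ∪ {1/(n+1) | n})`, with slopes `±1`.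
Away from its zeros and peaks it is locally affine, so it has a `C²` arc-length
parametrisation there; hence `K_f` is countable and is the union of its singletons, on which
`V_{1/2}` vanishes. At a zero or a peak `f` is a corner `f x₀ + σ|x - x₀|`, where `v_f` is
locally a translation of `x ↦ |σ| x`, so an arc-length parametrisation would be
`s ↦ f x₀ ± |s - s₀|` near `s₀ = v_f x₀`, which is not differentiable; so all zeros and peaks
lie in `K_f`. From the `n`-th zero to the next peak `f` rises by `1/(2(n+1)(n+2))`, whose square
root is at least `1/(4(n+1))`, and the harmonic series diverges.
-/

open Filter Metric Topology

lemma le_fracVar {α : ℝ} {g : ℝ → ℝ} {K : Set ℝ} {m : ℕ} (p : Fin m → ℝ × ℝ)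
    (hK : ∀ i, (p i).1 ∈ K ∧ (p i).2 ∈ K ∧ (p i).1 ≤ (p i).2)
    (hp : ∀ i j, i < j → (p i).2 ≤ (p j).1) :
    ∑ i, ENNReal.ofReal (|g (p i).2 - g (p i).1| ^ α) ≤ fracVar α g K :=
  le_iSup_of_le m <| le_iSup_of_le p <| le_iSup_of_le hK <| le_iSup_of_le hp le_rfl

lemma fracVar_eq_zero_of_subsingleton {α : ℝ} (hα : α ≠ 0) (g : ℝ → ℝ) {K : Set ℝ}
    (hK : K.Subsingleton) : fracVar α g K = 0 := by
  refine le_antisymm (iSup_le fun m => iSup_le fun p => iSup_le fun hpK => iSup_le fun _ => ?_)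
    bot_le
  refine (Finset.sum_eq_zero fun i _ => ?_).le
  rw [hK (hpK i).1 (hpK i).2.1, sub_self, abs_zero, Real.zero_rpow hα, ENNReal.ofReal_zero]

lemma vbgHalf_of_countable_Kset {X : Type*} [NormedAddCommGroup X] [NormedSpace ℝ X]
    {f : ℝ → X} {a b : ℝ} (hf : BoundedVariationOn f (Icc a b))
    (hK : (Kset f a b).Countable) : VBGHalf f a b := by
  obtain ⟨u, hu⟩ := countable_iff_exists_subset_range.1 hK
  have hsub (m : ℕ) : (Kset f a b ∩ {u m}).Subsingleton :=
    subsingleton_singleton.anti inter_subset_right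
  refine ⟨hf, fun m => Kset f a b ∩ {u m}, fun m => ⟨(hsub m).isClosed, fun x hx => hx.1.1, ?_⟩,
    ?_⟩
  · rw [fracVar_eq_zero_of_subsingleton (by norm_num) _ (hsub m)]
    exact ENNReal.zero_lt_top
  · ext x
    simp only [mem_iUnion, mem_inter_iff, mem_singleton_iff]
    exact ⟨fun hx => (hu hx).imp fun m hm => ⟨hx, hm.symm⟩, fun ⟨_, hx, _⟩ => hx⟩

lemma eVariationOn_congr_edist {α E F : Type*} [LinearOrder α] [PseudoEMetricSpace E]
    [PseudoEMetricSpace F] {f : α → E} {g : α → F} {s : Set α}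
    (h : ∀ x ∈ s, ∀ y ∈ s, edist (f x) (f y) = edist (g x) (g y)) :
    eVariationOn f s = eVariationOn g s :=
  iSup_congr fun p => Finset.sum_congr rfl fun _ _ => h _ (p.2.2.2 _) _ (p.2.2.2 _)

lemma eVariationOn_Icc_of_eqOn_affine {f : ℝ → ℝ} {c d e σ : ℝ} (hcd : c ≤ d)
    (hf : ∀ y ∈ Icc c d, f y = e + σ * y) :
    eVariationOn f (Icc c d) = ENNReal.ofReal (|σ| * (d - c)) := by
  have hmono : MonotoneOn (fun y => |σ| * y) (Icc c d) :=
    fun x _ y _ hxy => mul_le_mul_of_nonneg_left hxy (abs_nonneg σ)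
  rw [eVariationOn_congr_edist (g := fun y => |σ| * y), ← inter_self (Icc c d),
    hmono.eVariationOn_eq ⟨le_rfl, hcd⟩ ⟨hcd, le_rfl⟩, mul_sub]
  intro x hx y hy
  simp only [edist_dist, Real.dist_eq, hf x hx, hf y hy, ← mul_sub, add_sub_add_left_eq_sub,
    abs_mul, abs_abs]

lemma vfn_eq_add {X : Type*} [NormedAddCommGroup X] {f : ℝ → X} {a b c : ℝ}
    (hf : BoundedVariationOn f (Icc a c)) (hab : a ≤ b) (hbc : b ≤ c) :
    vfn f a c = vfn f a b + (eVariationOn f (Icc b c)).toReal := by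
  have hsplit := eVariationOn.Icc_add_Icc f (s := Icc a c) hab hbc ⟨hab, hbc⟩
  rw [inter_self, Icc_inter_Icc, Icc_inter_Icc, max_self, min_eq_right hbc, min_self,
    max_eq_right hab] at hsplit
  rw [vfn, vfn, ← hsplit, ENNReal.toReal_add (hf.mono (Icc_subset_Icc le_rfl hbc))
    (hf.mono (Icc_subset_Icc hab le_rfl))]

lemma hasC2ArcLengthParam_of_eqOn_affine {f : ℝ → ℝ} {c d e σ : ℝ} (hcd : c ≤ d)
    (hf : ∀ y ∈ Icc c d, f y = e + σ * y) : HasC2ArcLengthParam f c d := by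
  -- For `σ = 0` the slope `σ / |σ|` is the junk value `0`, which is still right as `v_f = 0`.
  have hvar (x : ℝ) (hx : x ∈ Icc c d) : vfn f c x = |σ| * (x - c) := by
    rw [vfn, eVariationOn_Icc_of_eqOn_affine hx.1 fun y hy => hf y ⟨hy.1, hy.2.trans hx.2⟩,
      ENNReal.toReal_ofReal (mul_nonneg (abs_nonneg σ) (sub_nonneg.2 hx.1))]
  have hbv : BoundedVariationOn f (Icc c d) := by
    rw [BoundedVariationOn, eVariationOn_Icc_of_eqOn_affine hcd hf]
    exact ENNReal.ofReal_ne_top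
  refine ⟨hbv, fun t => f c + σ / |σ| * t, ⟨fun _ => σ / |σ|, fun _ => 0, fun t _ => ?_,
      fun _ _ => hasDerivWithinAt_const _ _ _⟩, fun x hx => ?_⟩
  · simpa using ((hasDerivWithinAt_id t _).const_mul (σ / |σ|)).const_add (f c)
  · show f c + σ / |σ| * vfn f c x = f x
    rw [hvar x hx, ← mul_assoc, div_mul_cancel_of_imp fun h => abs_eq_zero.1 h, hf x hx,
      hf c ⟨le_rfl, hcd⟩]
    ring

lemma notMem_Kset_of_eqOn_affine {f : ℝ → ℝ} {a b c d e σ x : ℝ} (hcx : c < x) (hxd : x < d)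
    (hf : ∀ y ∈ Icc c d, f y = e + σ * y) : x ∉ Kset f a b := fun ⟨hx, hK⟩ =>
  hK ⟨c, d, hcx, hxd, Or.inr <| hasC2ArcLengthParam_of_eqOn_affine
    ((max_le hcx.le hx.1).trans (le_min hxd.le hx.2))
    fun y hy => hf y ⟨(le_max_left c a).trans hy.1, hy.2.trans (min_le_left d b)⟩⟩

lemma not_differentiableAt_of_eventuallyEq_abs {g : ℝ → ℝ} {s₀ e k : ℝ} (hk : k ≠ 0)
    (hg : g =ᶠ[𝓝 s₀] fun s => e + k * |s - s₀|) : ¬ DifferentiableAt ℝ g s₀ := by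
  intro hd
  rw [hg.differentiableAt_iff] at hd
  have habs : DifferentiableAt ℝ (fun s => |s - s₀|) s₀ := by
    simpa [hk] using (hd.const_add (-e)).const_mul k⁻¹
  rw [differentiableAt_comp_sub_const, sub_self] at habs
  exact not_differentiableAt_abs_zero habs

lemma vfn_eq_of_abs_kink {f : ℝ → ℝ} {c x₀ δ σ : ℝ} (hδ : 0 ≤ δ) (hc : c ≤ x₀ - δ)
    (hf : BoundedVariationOn f (Icc c (x₀ + δ)))
    (hkink : ∀ y ∈ Icc (x₀ - δ) (x₀ + δ), f y = f x₀ + σ * |y - x₀|) :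
    ∀ y ∈ Icc (x₀ - δ) (x₀ + δ), vfn f c y = vfn f c x₀ + |σ| * (y - x₀) := by
  intro y hy
  rcases le_total x₀ y with hxy | hyx
  · have hright : ∀ z ∈ Icc x₀ y, f z = (f x₀ - σ * x₀) + σ * z := fun z hz => by
      rw [hkink z ⟨by linarith [hz.1], hz.2.trans hy.2⟩, abs_of_nonneg (sub_nonneg.2 hz.1)]
      ring
    rw [vfn_eq_add (hf.mono (Icc_subset_Icc le_rfl hy.2)) (by linarith) hxy,
      eVariationOn_Icc_of_eqOn_affine hxy hright,
      ENNReal.toReal_ofReal (mul_nonneg (abs_nonneg σ) (sub_nonneg.2 hxy))]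
  · have hleft : ∀ z ∈ Icc y x₀, f z = (f x₀ + σ * x₀) + -σ * z := fun z hz => by
      rw [hkink z ⟨hy.1.trans hz.1, by linarith [hz.2]⟩, abs_of_nonpos (sub_nonpos.2 hz.2)]
      ring
    have hsplit := vfn_eq_add (hf.mono (Icc_subset_Icc le_rfl (by linarith))) (hc.trans hy.1) hyx
    rw [eVariationOn_Icc_of_eqOn_affine hyx hleft, abs_neg,
      ENNReal.toReal_ofReal (mul_nonneg (abs_nonneg σ) (sub_nonneg.2 hyx))] at hsplit
    linarith

lemma not_hasC2ArcLengthParam_of_abs_kink {f : ℝ → ℝ} {c d x₀ δ σ : ℝ} (hσ : σ ≠ 0)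
    (hδ : 0 < δ) (hcδ : c < x₀ - δ) (hδd : x₀ + δ < d)
    (hkink : ∀ y ∈ Icc (x₀ - δ) (x₀ + δ), f y = f x₀ + σ * |y - x₀|) :
    ¬ HasC2ArcLengthParam f c d := by
  rintro ⟨hbv, g, ⟨g', -, hg', -⟩, hgf⟩
  have hv := vfn_eq_of_abs_kink hδ.le hcδ.le (hbv.mono (Icc_subset_Icc le_rfl hδd.le)) hkink
  set s₀ := vfn f c x₀
  have hσ' : 0 < |σ| := abs_pos.2 hσ
  have hσδ : 0 < |σ| * δ := mul_pos hσ' hδ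
  have hlow : 0 ≤ s₀ - |σ| * δ := by
    have := hv (x₀ - δ) ⟨le_rfl, by linarith⟩
    rw [sub_sub_cancel_left, mul_neg] at this
    have hnonneg : 0 ≤ vfn f c (x₀ - δ) := ENNReal.toReal_nonneg
    linarith
  have hhigh : s₀ + |σ| * δ ≤ vfn f c d := by
    have := vfn_eq_add hbv (by linarith : c ≤ x₀ + δ) hδd.le
    rw [hv (x₀ + δ) ⟨by linarith, le_rfl⟩] at this
    linarith [ENNReal.toReal_nonneg (a := eVariationOn f (Icc (x₀ + δ) d))]
  have hg : g =ᶠ[𝓝 s₀] fun s => f x₀ + σ / |σ| * |s - s₀| := by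
    filter_upwards [Icc_mem_nhds (by linarith : s₀ - |σ| * δ < s₀)
      (by linarith : s₀ < s₀ + |σ| * δ)] with s hs
    have hy : x₀ + (s - s₀) / |σ| ∈ Icc (x₀ - δ) (x₀ + δ) := by
      constructor
      · linarith [(le_div_iff₀ hσ').2 (by linarith [hs.1] : -δ * |σ| ≤ s - s₀)]
      · linarith [(div_le_iff₀ hσ').2 (by linarith [hs.2] : s - s₀ ≤ δ * |σ|)]
    have hvy : vfn f c (x₀ + (s - s₀) / |σ|) = s := by
      rw [hv _ hy]
      field_simp
      ring
    rw [← hvy, hgf _ ⟨by linarith [hy.1], by linarith [hy.2]⟩, hkink _ hy, hvy,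
      add_sub_cancel_left, abs_div, abs_abs]
    ring
  refine not_differentiableAt_of_eventuallyEq_abs (div_ne_zero hσ hσ'.ne') hg ?_
  exact ((hg' s₀ ⟨by linarith, by linarith⟩).hasDerivAt
    (Icc_mem_nhds (by linarith) (by linarith))).differentiableAt

theorem mem_Kset_of_abs_kink {f : ℝ → ℝ} {a b x₀ ε σ : ℝ} (hx₀ : x₀ ∈ Ioo a b) (hε : 0 < ε)
    (hσ : σ ≠ 0) (hkink : ∀ y ∈ Icc (x₀ - ε) (x₀ + ε), f y = f x₀ + σ * |y - x₀|) :
    x₀ ∈ Kset f a b := by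
  refine ⟨Ioo_subset_Icc_self hx₀, ?_⟩
  rintro ⟨c, d, hcx, hxd, hcase⟩
  set c' := max c a
  set d' := min d b
  obtain ⟨δ, hδ, hδε, hcδ, hδd⟩ : ∃ δ, 0 < δ ∧ δ ≤ ε ∧ c' < x₀ - δ ∧ x₀ + δ < d' := by
    have hc' : c' < x₀ := max_lt hcx hx₀.1
    have hd' : x₀ < d' := lt_min hxd hx₀.2
    refine ⟨min ε (min (x₀ - c') (d' - x₀)) / 2, by positivity, ?_, ?_, ?_⟩ <;>
      linarith [min_le_left ε (min (x₀ - c') (d' - x₀)),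
        min_le_right ε (min (x₀ - c') (d' - x₀)), min_le_left (x₀ - c') (d' - x₀),
        min_le_right (x₀ - c') (d' - x₀)]
  have hkinkδ : ∀ y ∈ Icc (x₀ - δ) (x₀ + δ), f y = f x₀ + σ * |y - x₀| := fun y hy =>
    hkink y (Icc_subset_Icc (by linarith) (by linarith) hy)
  rcases hcase with hconst | hC2
  · have hmove := hkinkδ (x₀ + δ) ⟨by linarith, le_rfl⟩
    rw [← hconst x₀ ⟨hcδ.le.trans (by linarith), (by linarith)⟩ (x₀ + δ)
      ⟨by linarith, hδd.le⟩, add_sub_cancel_left, abs_of_pos hδ] at hmove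
    exact mul_ne_zero hσ hδ.ne' (by linarith)
  · exact not_hasC2ArcLengthParam_of_abs_kink hσ hδ hcδ hδd hkinkδ hC2

noncomputable def sawtoothNode (n : ℕ) : ℝ := ((n : ℝ) + 1)⁻¹

noncomputable def sawtoothPeak (n : ℕ) : ℝ := (sawtoothNode (n + 1) + sawtoothNode n) / 2

noncomputable def sawtooth (x : ℝ) : ℝ := infDist x (insert 0 (range sawtoothNode))

lemma sawtoothNode_pos (n : ℕ) : 0 < sawtoothNode n := by
  rw [sawtoothNode]
  positivity

lemma sawtoothNode_le_one (n : ℕ) : sawtoothNode n ≤ 1 :=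
  inv_le_one_of_one_le₀ (by linarith [n.cast_nonneg (α := ℝ)])

lemma sawtoothNode_antitone : Antitone sawtoothNode := fun m n hmn =>
  inv_anti₀ (by positivity) (by gcongr)

lemma sawtoothNode_succ_lt (n : ℕ) : sawtoothNode (n + 1) < sawtoothNode n :=
  inv_strictAnti₀ (by positivity) (by push_cast; linarith)

lemma sawtoothNode_succ_lt_sawtoothPeak (n : ℕ) : sawtoothNode (n + 1) < sawtoothPeak n := by
  rw [sawtoothPeak]
  linarith [sawtoothNode_succ_lt n]

lemma sawtoothPeak_lt_sawtoothNode (n : ℕ) : sawtoothPeak n < sawtoothNode n := by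
  rw [sawtoothPeak]
  linarith [sawtoothNode_succ_lt n]

lemma lipschitzWith_sawtooth : LipschitzWith 1 sawtooth := lipschitz_infDist_pt _

lemma boundedVariationOn_sawtooth : BoundedVariationOn sawtooth (Icc 0 1) := by
  simpa using lipschitzWith_sawtooth.locallyBoundedVariationOn (Icc 0 1) 0 1
    ⟨le_rfl, zero_le_one⟩ ⟨zero_le_one, le_rfl⟩

lemma sawtooth_eq_min {n : ℕ} {x : ℝ} (h₁ : sawtoothNode (n + 1) ≤ x) (h₂ : x ≤ sawtoothNode n) :
    sawtooth x = min (x - sawtoothNode (n + 1)) (sawtoothNode n - x) := by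
  have hdist (k : ℕ) : sawtooth x ≤ |x - sawtoothNode k| :=
    (infDist_le_dist_of_mem (mem_insert_of_mem 0 (mem_range_self k))).trans_eq (Real.dist_eq _ _)
  refine le_antisymm (le_min ?_ ?_) ((le_infDist ⟨0, mem_insert _ _⟩).2 ?_)
  · simpa [abs_of_nonneg (sub_nonneg.2 h₁)] using hdist (n + 1)
  · simpa [abs_of_nonpos (sub_nonpos.2 h₂)] using hdist n
  rintro y (rfl | ⟨k, rfl⟩) <;> rw [Real.dist_eq]
  · rw [sub_zero]
    exact (min_le_left _ _).trans ((sub_le_self _ (sawtoothNode_pos _).le).trans (le_abs_self x))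
  rcases le_or_gt k n with hkn | hnk
  · rw [abs_sub_comm]
    exact (min_le_right _ _).trans
      ((sub_le_sub_right (sawtoothNode_antitone hkn) x).trans (le_abs_self _))
  · exact (min_le_left _ _).trans
      ((sub_le_sub_left (sawtoothNode_antitone hnk) x).trans (le_abs_self _))

lemma sawtooth_eq_of_le_sawtoothPeak {n : ℕ} {x : ℝ} (h₁ : sawtoothNode (n + 1) ≤ x)
    (h₂ : x ≤ sawtoothPeak n) : sawtooth x = x - sawtoothNode (n + 1) := by
  rw [sawtooth_eq_min h₁ (h₂.trans (sawtoothPeak_lt_sawtoothNode n).le), min_eq_left]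
  rw [sawtoothPeak] at h₂
  linarith

lemma sawtooth_eq_of_sawtoothPeak_le {n : ℕ} {x : ℝ} (h₁ : sawtoothPeak n ≤ x)
    (h₂ : x ≤ sawtoothNode n) : sawtooth x = sawtoothNode n - x := by
  rw [sawtooth_eq_min ((sawtoothNode_succ_lt_sawtoothPeak n).le.trans h₁) h₂, min_eq_right]
  rw [sawtoothPeak] at h₁
  linarith

lemma exists_sawtoothNode_lt_lt {x : ℝ} (h₀ : 0 < x) (h₁ : x ≤ 1)
    (hx : x ∉ range sawtoothNode) : ∃ n, sawtoothNode (n + 1) < x ∧ x < sawtoothNode n := by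
  obtain ⟨n, hn⟩ : ∃ n, ⌊x⁻¹⌋₊ = n + 1 :=
    Nat.exists_eq_add_one.2 (Nat.le_floor (by simpa using one_le_inv_iff₀.2 ⟨h₀, h₁⟩))
  refine ⟨n, ?_, (le_of_not_gt fun h => ?_).lt_of_ne fun h => hx ⟨n, h.symm⟩⟩
  · have := Nat.lt_floor_add_one x⁻¹
    rw [hn] at this
    rw [sawtoothNode, inv_lt_comm₀ (by positivity) h₀]
    push_cast at this ⊢
    linarith
  · have := Nat.floor_le (inv_nonneg.2 h₀.le)
    rw [hn] at this
    rw [sawtoothNode, inv_lt_comm₀ (by positivity) h₀] at h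
    push_cast at this
    linarith

lemma Kset_sawtooth_subset :
    Kset sawtooth 0 1 ⊆ insert 0 (range sawtoothNode ∪ range sawtoothPeak) := by
  intro x hxK
  by_contra hx
  simp only [mem_insert_iff, mem_union, not_or] at hx
  obtain ⟨hx₀, hnode, hpeak⟩ := hx
  obtain ⟨n, hl, hr⟩ := exists_sawtoothNode_lt_lt (hxK.1.1.lt_of_ne' hx₀) hxK.1.2 hnode
  rcases lt_trichotomy x (sawtoothPeak n) with h | h | h
  · refine notMem_Kset_of_eqOn_affine hl h (e := -sawtoothNode (n + 1)) (σ := 1)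
      (fun y hy => ?_) hxK
    rw [sawtooth_eq_of_le_sawtoothPeak hy.1 hy.2]
    ring
  · exact hpeak ⟨n, h.symm⟩
  · refine notMem_Kset_of_eqOn_affine h hr (e := sawtoothNode n) (σ := -1)
      (fun y hy => ?_) hxK
    rw [sawtooth_eq_of_sawtoothPeak_le hy.1 hy.2]
    ring

lemma countable_Kset_sawtooth : (Kset sawtooth 0 1).Countable :=
  (((countable_range _).union (countable_range _)).insert 0).mono Kset_sawtooth_subset

lemma sawtoothPeak_mem_Kset (n : ℕ) : sawtoothPeak n ∈ Kset sawtooth 0 1 := by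
  have hL := sawtoothNode_succ_lt_sawtoothPeak n
  have hR := sawtoothPeak_lt_sawtoothNode n
  have hpeak : sawtoothPeak n = (sawtoothNode (n + 1) + sawtoothNode n) / 2 := rfl
  refine mem_Kset_of_abs_kink (ε := sawtoothPeak n - sawtoothNode (n + 1)) (σ := -1)
    ⟨(sawtoothNode_pos _).trans hL, hR.trans_le (sawtoothNode_le_one n)⟩ (by linarith)
    (by norm_num) fun y hy => ?_
  rw [sawtooth_eq_of_le_sawtoothPeak hL.le le_rfl]
  rcases le_total y (sawtoothPeak n) with hy' | hy'
  · rw [sawtooth_eq_of_le_sawtoothPeak (by linarith [hy.1]) hy', abs_of_nonpos (by linarith)]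
    ring
  · rw [sawtooth_eq_of_sawtoothPeak_le hy' (by linarith [hy.2]), abs_of_nonneg (by linarith)]
    linarith

lemma sawtoothNode_succ_mem_Kset (n : ℕ) : sawtoothNode (n + 1) ∈ Kset sawtooth 0 1 := by
  have hL := sawtoothNode_succ_lt_sawtoothPeak n
  have hR := sawtoothPeak_lt_sawtoothNode (n + 1)
  set ε := min (sawtoothPeak n - sawtoothNode (n + 1)) (sawtoothNode (n + 1) - sawtoothPeak (n + 1))
  have hε₁ : ε ≤ sawtoothPeak n - sawtoothNode (n + 1) := min_le_left _ _
  have hε₂ : ε ≤ sawtoothNode (n + 1) - sawtoothPeak (n + 1) := min_le_right _ _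
  refine mem_Kset_of_abs_kink (ε := ε) (σ := 1)
    ⟨sawtoothNode_pos _, (sawtoothNode_succ_lt n).trans_le (sawtoothNode_le_one n)⟩
    (lt_min (by linarith) (by linarith)) one_ne_zero fun y hy => ?_
  rw [sawtooth_eq_of_le_sawtoothPeak le_rfl hL.le, sub_self, zero_add, one_mul]
  rcases le_total y (sawtoothNode (n + 1)) with hy' | hy'
  · rw [sawtooth_eq_of_sawtoothPeak_le (by linarith [hy.1]) hy', abs_of_nonpos (by linarith)]
    ring
  · rw [sawtooth_eq_of_le_sawtoothPeak hy' (by linarith [hy.2]), abs_of_nonneg (by linarith)]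

lemma inv_four_mul_le_rpow_sawtooth_jump (n : ℕ) :
    (4 * ((n : ℝ) + 1))⁻¹ ≤
      |sawtooth (sawtoothPeak n) - sawtooth (sawtoothNode (n + 1))| ^ (1 / 2 : ℝ) := by
  have hL := sawtoothNode_succ_lt_sawtoothPeak n
  rw [sawtooth_eq_of_le_sawtoothPeak hL.le le_rfl,
    sawtooth_eq_of_le_sawtoothPeak le_rfl hL.le, sub_self, sub_zero, abs_of_pos (sub_pos.2 hL),
    ← Real.sqrt_eq_rpow, Real.le_sqrt (by positivity) (sub_pos.2 hL).le, sawtoothPeak,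
    sawtoothNode, sawtoothNode]
  push_cast
  field_simp
  nlinarith

theorem fracVar_sawtooth_Kset_eq_top : fracVar (1 / 2) sawtooth (Kset sawtooth 0 1) = ⊤ := by
  have hpartial (N : ℕ) :
      ENNReal.ofReal ((∑ n ∈ Finset.range N, 1 / ((n : ℝ) + 1)) / 4) ≤
        fracVar (1 / 2) sawtooth (Kset sawtooth 0 1) := by
    -- the `i`-th interval is the rising half of tooth `N - 1 - i`, so the intervals increase
    refine le_trans ?_ (le_fracVar (fun i : Fin N => (sawtoothNode (i.rev + 1), sawtoothPeak i.rev))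
      (fun i => ⟨sawtoothNode_succ_mem_Kset _, sawtoothPeak_mem_Kset _,
        (sawtoothNode_succ_lt_sawtoothPeak _).le⟩) fun i j hij => ?_)
    · rw [Finset.sum_div, ENNReal.ofReal_sum_of_nonneg fun n _ => by positivity,
        ← Fin.sum_univ_eq_sum_range (fun n => ENNReal.ofReal (1 / ((n : ℝ) + 1) / 4)),
        ← Equiv.sum_comp Fin.revPerm]
      refine Finset.sum_le_sum fun i _ => ENNReal.ofReal_le_ofReal ?_
      convert inv_four_mul_le_rpow_sawtooth_jump i.rev using 1
      simp only [Fin.revPerm_apply]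
      field_simp
    · exact (sawtoothPeak_lt_sawtoothNode _).le.trans
        (sawtoothNode_antitone (Nat.succ_le_of_lt (Fin.rev_lt_rev.2 hij)))
  exact top_unique (le_of_tendsto' (ENNReal.tendsto_ofReal_atTop.comp
    (Real.tendsto_sum_range_one_div_nat_succ_atTop.atTop_div_const four_pos)) hpartial)

/-- There is a continuous `VBG_{1/2}` function `f : [0,1] → ℝ` with
`V_{1/2}(f, K_f) = ∞`. -/
theorem stmt13 :
    ∃ f : ℝ → ℝ, ContinuousOn f (Set.Icc (0:ℝ) 1) ∧
      VBGHalf f 0 1 ∧ fracVar (1/2) f (Kset f 0 1) = ⊤ :=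
  ⟨sawtooth, lipschitzWith_sawtooth.continuous.continuousOn,
    vbgHalf_of_countable_Kset boundedVariationOn_sawtooth countable_Kset_sawtooth,
    fracVar_sawtooth_Kset_eq_top⟩
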